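/- Lower bounds at the fixed point: let x* be the unique fixed point of a path bargaining instance. Then for every i = 1,…,n: x*_i ≥ 1/(2 − x*_{i+1}) (with x*_{n+1} = 0); consequently x*_i ≥ (n−i+1)/(n−i+2), and w*_i = d_0·∏_{j=1}^{i} x*_j ≥ d_0·(n−i+1)/(n+1). -/

import Mathlib

/-- `pathW d x i` is the value `w_i = d_0 · ∏_{j=1}^{i} x_j` reaching node `i`
in a path bargaining instance with values `d` and shares `x`. -/
noncomputable def pathW (d x : ℕ → ℝ) (i : ℕ) : ℝ :=
  d 0 * ∏ j ∈ Finset.Icc 1 i, x j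

/-- A share vector: `x_i ∈ [0,1]` for `i = 1,…,n`. -/
def IsShareVector (n : ℕ) (x : ℕ → ℝ) : Prop :=
  ∀ i, 1 ≤ i → i ≤ n → 0 ≤ x i ∧ x i ≤ 1

/-- A fixed point of the path bargaining equations
`(1 − x_i)·w_{i−1} = (1 − x_{i+1})·(x_i·w_{i−1} − d_i)` for `i = 1,…,n`,
with the convention `x_{n+1} = 0`. -/
def IsPathFixedPoint (n : ℕ) (d x : ℕ → ℝ) : Prop :=
  IsShareVector n x ∧
  ∀ i, 1 ≤ i → i ≤ n →
    (1 - x i) * pathW d x (i - 1) =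
      (1 - (if i = n then 0 else x (i + 1))) * (x i * pathW d x (i - 1) - d i)

/-!
At a fixed point the right-hand side of the bargaining equation at node `i` is at most
`(1 - x_{i+1}) x_i w_{i-1}`, because `d_i ≥ 0`. As long as `w_{i-1} > 0` this gives
`1 - x_i ≤ (1 - x_{i+1}) x_i`, i.e. `x_i (2 - x_{i+1}) ≥ 1`; in particular `x_i > 0`, so
`w_i > 0` and the argument propagates along the path. Feeding `x_{n+1} = 0` into
`x_i ≥ 1 / (2 - x_{i+1})` and inducting backwards from `i = n` gives
`x_i ≥ (n-i+1)/(n-i+2)`, and the product of these ratios telescopes to `(n-i+1)/(n+1)`.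
-/

lemma pathW_zero (d x : ℕ → ℝ) : pathW d x 0 = d 0 := by
  simp [pathW]

lemma pathW_succ (d x : ℕ → ℝ) (i : ℕ) : pathW d x (i + 1) = pathW d x i * x (i + 1) := by
  rw [pathW, pathW, Finset.prod_Icc_succ_top (Nat.le_add_left 1 i), mul_assoc]

lemma one_le_mul_two_sub_of_bargaining_eq {a b w δ : ℝ} (hw : 0 < w) (hδ : 0 ≤ δ)
    (hb : b ≤ 1) (h : (1 - a) * w = (1 - b) * (a * w - δ)) : 1 ≤ a * (2 - b) := by
  have : (1 - a) * w ≤ ((1 - b) * a) * w := by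
    nlinarith [mul_nonneg (sub_nonneg.mpr hb) hδ]
  nlinarith [le_of_mul_le_mul_right this hw]

lemma add_one_div_add_two_le_of_one_le_mul_two_sub {a b t : ℝ} (ht : 0 ≤ t) (ha : 0 ≤ a)
    (hb : t / (t + 1) ≤ b) (hab : 1 ≤ a * (2 - b)) : (t + 1) / (t + 2) ≤ a := by
  rw [div_le_iff₀ (by positivity)] at hb ⊢
  nlinarith [mul_le_mul_of_nonneg_left hb ha]

namespace IsPathFixedPoint

variable {n : ℕ} {d x : ℕ → ℝ}

lemma nextShare_le_one (hx : IsPathFixedPoint n d x) {i : ℕ} (hin : i ≤ n) :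
    (if i = n then 0 else x (i + 1)) ≤ 1 := by
  split_ifs
  · exact zero_le_one
  · exact (hx.1 (i + 1) (by omega) (by omega)).2

lemma one_le_mul_two_sub_of_pathW_pos (hx : IsPathFixedPoint n d x)
    (hd : ∀ j, 1 ≤ j → j ≤ n → 0 ≤ d j) {i : ℕ} (hi : 1 ≤ i) (hin : i ≤ n)
    (hw : 0 < pathW d x (i - 1)) :
    1 ≤ x i * (2 - (if i = n then 0 else x (i + 1))) :=
  one_le_mul_two_sub_of_bargaining_eq hw (hd i hi hin) (hx.nextShare_le_one hin)
    (hx.2 i hi hin)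

lemma pathW_pos (hx : IsPathFixedPoint n d x) (hd0 : 0 < d 0)
    (hd : ∀ j, 1 ≤ j → j ≤ n → 0 ≤ d j) {i : ℕ} (hin : i ≤ n) : 0 < pathW d x i := by
  induction i with
  | zero => rwa [pathW_zero]
  | succ i ih =>
    have hw := ih (by omega)
    have hbound := hx.one_le_mul_two_sub_of_pathW_pos hd (Nat.le_add_left 1 i) hin hw
    have hnext := hx.nextShare_le_one hin
    rw [pathW_succ]
    exact mul_pos hw (by nlinarith)

lemma one_le_mul_two_sub (hx : IsPathFixedPoint n d x) (hd0 : 0 < d 0)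
    (hd : ∀ j, 1 ≤ j → j ≤ n → 0 ≤ d j) {i : ℕ} (hi : 1 ≤ i) (hin : i ≤ n) :
    1 ≤ x i * (2 - (if i = n then 0 else x (i + 1))) :=
  hx.one_le_mul_two_sub_of_pathW_pos hd hi hin (hx.pathW_pos hd0 hd (by omega))

lemma div_le_share (hx : IsPathFixedPoint n d x) (hd0 : 0 < d 0)
    (hd : ∀ j, 1 ≤ j → j ≤ n → 0 ≤ d j) {i : ℕ} (hi : 1 ≤ i) (hin : i ≤ n) :
    ((n - i + 1 : ℕ) : ℝ) / ((n - i + 2 : ℕ) : ℝ) ≤ x i := by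
  induction hk : n - i generalizing i with
  | zero =>
    have hbound := hx.one_le_mul_two_sub hd0 hd hi hin
    rw [if_pos (by omega)] at hbound
    norm_num
    linarith
  | succ k ih =>
    have hnext := ih (i := i + 1) (by omega) (by omega) (by omega)
    have hbound := hx.one_le_mul_two_sub hd0 hd hi hin
    rw [if_neg (by omega)] at hbound
    push_cast at hnext ⊢
    refine add_one_div_add_two_le_of_one_le_mul_two_sub (by positivity) (hx.1 i hi hin).1 ?_
      hbound
    convert hnext using 2
    ring

lemma div_le_pathW (hx : IsPathFixedPoint n d x) (hd0 : 0 < d 0)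
    (hd : ∀ j, 1 ≤ j → j ≤ n → 0 ≤ d j) {i : ℕ} (hin : i ≤ n) :
    d 0 * ((n - i + 1 : ℕ) : ℝ) / ((n + 1 : ℕ) : ℝ) ≤ pathW d x i := by
  induction i with
  | zero => rw [pathW_zero, Nat.sub_zero, mul_div_assoc, div_self (by positivity), mul_one]
  | succ i ih =>
    have hw := ih (by omega)
    have hratio := hx.div_le_share hd0 hd (Nat.le_add_left 1 i) hin
    rw [show n - i + 1 = n - (i + 1) + 2 by omega] at hw
    rw [pathW_succ]
    calc d 0 * ((n - (i + 1) + 1 : ℕ) : ℝ) / ((n + 1 : ℕ) : ℝ)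
        = d 0 * ((n - (i + 1) + 2 : ℕ) : ℝ) / ((n + 1 : ℕ) : ℝ) *
            (((n - (i + 1) + 1 : ℕ) : ℝ) / ((n - (i + 1) + 2 : ℕ) : ℝ)) := by
          field_simp
      _ ≤ pathW d x i * x (i + 1) :=
          mul_le_mul hw hratio (by positivity) (hx.pathW_pos hd0 hd (by omega)).le

end IsPathFixedPoint

theorem fixed_point_lower_bounds_general (n : ℕ) (d : ℕ → ℝ)
    (hd0 : 0 < d 0) (hd : ∀ j, 1 ≤ j → j ≤ n → 0 ≤ d j ∧ d j < d 0)
    (x : ℕ → ℝ) (hx : IsPathFixedPoint n d x) :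
    ∀ i, 1 ≤ i → i ≤ n →
      1 / (2 - (if i = n then 0 else x (i + 1))) ≤ x i ∧
      ((n - i + 1 : ℕ) : ℝ) / ((n - i + 2 : ℕ) : ℝ) ≤ x i ∧
      d 0 * ((n - i + 1 : ℕ) : ℝ) / ((n + 1 : ℕ) : ℝ) ≤ pathW d x i := by
  have hd' : ∀ j, 1 ≤ j → j ≤ n → 0 ≤ d j := fun j hj hjn => (hd j hj hjn).1
  intro i hi hin
  have hnext := hx.nextShare_le_one hin
  refine ⟨?_, hx.div_le_share hd0 hd' hi hin, hx.div_le_pathW hd0 hd' hin⟩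
  rw [div_le_iff₀ (by linarith)]
  exact hx.one_le_mul_two_sub hd0 hd' hi hin

/-- Lower bounds at the fixed point. -/
theorem fixed_point_lower_bounds (n : ℕ) (hn : 1 ≤ n) (d : ℕ → ℝ)
    (hd0 : 0 < d 0) (hd : ∀ j, 1 ≤ j → j ≤ n → 0 ≤ d j ∧ d j < d 0)
    (x : ℕ → ℝ) (hx : IsPathFixedPoint n d x) :
    ∀ i, 1 ≤ i → i ≤ n →
      1 / (2 - (if i = n then 0 else x (i + 1))) ≤ x i ∧
      ((n - i + 1 : ℕ) : ℝ) / ((n - i + 2 : ℕ) : ℝ) ≤ x i ∧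
      d 0 * ((n - i + 1 : ℕ) : ℝ) / ((n + 1 : ℕ) : ℝ) ≤ pathW d x i :=
  fixed_point_lower_bounds_general n d hd0 hd x hx
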